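/- arXiv:1412.2376 — 3 statements merged into one kernel-verified Lean document; each statement's English description precedes it below -/
import Mathlib

section
/- If G is a twin-free bipartite graph of order n without isolated vertices, then gamma_L(G) <= n/2. -/
/-- `D` is a dominating set of `G`: every vertex not in `D` has a neighbor in `D`. -/
def IsDominatingSet {V : Type*} (G : SimpleGraph V) (D : Set V) : Prop :=
  ∀ v ∉ D, ∃ u ∈ D, G.Adj u v

/-- `D` is a locating-dominating set of `G`: a dominating set such that any two distinct
vertices outside `D` have distinct neighborhoods within `D`. -/
def IsLocatingDominatingSet {V : Type*} (G : SimpleGraph V) (D : Set V) : Prop :=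
  IsDominatingSet G D ∧
    ∀ u ∉ D, ∀ v ∉ D, u ≠ v →
      {w | w ∈ D ∧ G.Adj u w} ≠ {w | w ∈ D ∧ G.Adj v w}

/-- The location-domination number `γ_L(G)`: minimum cardinality of a
locating-dominating set of `G`. -/
noncomputable def locDomNumber {V : Type*} [Fintype V] (G : SimpleGraph V) : ℕ :=
  sInf {n : ℕ | ∃ D : Set V, IsLocatingDominatingSet G D ∧ D.ncard = n}

/-- `G` is twin-free: no two distinct vertices have equal open neighborhoods
(open twins) or equal closed neighborhoods (closed twins). -/
def TwinFree {V : Type*} (G : SimpleGraph V) : Prop :=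
  ∀ u v : V, u ≠ v →
    G.neighborSet u ≠ G.neighborSet v ∧
      insert u (G.neighborSet u) ≠ insert v (G.neighborSet v)

/-- `G` has no isolated vertices. -/
def NoIsolatedVertex {V : Type*} (G : SimpleGraph V) : Prop :=
  ∀ v : V, ∃ u, G.Adj v u

/-
In a 2-coloring each color class `A` and its complement are vertex covers. Outside a vertex cover
every neighbor lies in the cover, so a vertex's trace on the cover is its whole neighborhood:
without isolated vertices the cover dominates, and without open twins it locates. Hence
`γ_L(G) ≤ min (|A|, |Aᶜ|) ≤ n/2`.
-/

namespace SimpleGraph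

variable {V : Type*} {G : SimpleGraph V} {D : Set V}

theorem Colorable.exists_isVertexCover_and_isVertexCover_compl (h : G.Colorable 2) :
    ∃ A : Set V, G.IsVertexCover A ∧ G.IsVertexCover Aᶜ := by
  obtain ⟨c⟩ := h
  have hcompl : c.colorClass 1 = (c.colorClass 0)ᶜ := by
    ext v
    simp only [Coloring.colorClass, Set.mem_ofPred_eq, Set.mem_compl_iff]
    omega
  refine ⟨c.colorClass 0, ?_, isVertexCover_compl.mpr (c.isIndepSet_colorClass 0)⟩
  rw [← isIndepSet_compl_iff_isVertexCover, ← hcompl]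
  exact c.isIndepSet_colorClass 1

theorem IsVertexCover.setOf_mem_and_adj_eq_neighborSet (hD : G.IsVertexCover D) {v : V}
    (hv : v ∉ D) : {w | w ∈ D ∧ G.Adj v w} = G.neighborSet v := by
  ext w
  exact ⟨And.right, fun hvw => ⟨(hD hvw).resolve_left hv, hvw⟩⟩

theorem IsVertexCover.isDominatingSet (hD : G.IsVertexCover D) (hiso : NoIsolatedVertex G) :
    IsDominatingSet G D := fun v hv =>
  let ⟨u, hvu⟩ := hiso v
  ⟨u, (hD hvu).resolve_left hv, hvu.symm⟩

theorem IsVertexCover.isLocatingDominatingSet (hD : G.IsVertexCover D)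
    (hiso : NoIsolatedVertex G) (hinj : Function.Injective G.neighborSet) :
    IsLocatingDominatingSet G D := by
  refine ⟨hD.isDominatingSet hiso, fun u hu v hv huv htrace => huv (hinj ?_)⟩
  rwa [hD.setOf_mem_and_adj_eq_neighborSet hu, hD.setOf_mem_and_adj_eq_neighborSet hv] at htrace

end SimpleGraph

theorem TwinFree.injective_neighborSet {V : Type*} {G : SimpleGraph V} (h : TwinFree G) :
    Function.Injective G.neighborSet := fun u v huv => by
  by_contra hne
  exact (h u v hne).1 huv

theorem locDomNumber_le_ncard {V : Type*} [Fintype V] {G : SimpleGraph V} {D : Set V}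
    (hD : IsLocatingDominatingSet G D) : locDomNumber G ≤ D.ncard :=
  Nat.sInf_le ⟨D, hD, rfl⟩

/-- If `G` is a twin-free bipartite graph of order `n` without isolated vertices, then
`γ_L(G) ≤ n/2`. (Bipartite means 2-colorable.) -/
theorem locDomNumber_le_half_of_bipartite {V : Type*} [Fintype V] (G : SimpleGraph V)
    (htf : TwinFree G) (hiso : NoIsolatedVertex G) (hbip : G.Colorable 2) :
    2 * locDomNumber G ≤ Fintype.card V := by
  obtain ⟨A, hA, hAc⟩ := hbip.exists_isVertexCover_and_isVertexCover_compl
  have hleA := locDomNumber_le_ncard (hA.isLocatingDominatingSet hiso htf.injective_neighborSet)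
  have hleAc := locDomNumber_le_ncard (hAc.isLocatingDominatingSet hiso htf.injective_neighborSet)
  have hsum : A.ncard + Aᶜ.ncard = Fintype.card V := by
    rw [Set.ncard_add_ncard_compl, Nat.card_eq_fintype_card]
  omega
end

section
/- For every integer k >= 2, every locating set of the graph A_k has cardinality at least k; in particular, the minimum cardinality of a locating set of A_k equals gamma_L(A_k), i.e., A_k is combinable. -/
/-- `S` is a locating set of `G`: any two distinct vertices outside `S` have distinct
(possibly empty) neighborhoods within `S`. -/
def IsLocatingSet {V : Type*} (G : SimpleGraph V) (S : Set V) : Prop :=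
  ∀ u ∉ S, ∀ v ∉ S, u ≠ v →
    {w | w ∈ S ∧ G.Adj u w} ≠ {w | w ∈ S ∧ G.Adj v w}

/-- The minimum cardinality of a locating set of `G`. -/
noncomputable def locNumber {V : Type*} [Fintype V] (G : SimpleGraph V) : ℕ :=
  sInf {n : ℕ | ∃ S : Set V, IsLocatingSet G S ∧ S.ncard = n}

/-- `G` is combinable: the minimum cardinality of a locating set equals `γ_L(G)`. -/
def Combinable {V : Type*} [Fintype V] (G : SimpleGraph V) : Prop :=
  locNumber G = locDomNumber G

/-- The graph `A_k` on vertices `x_1, …, x_{2k}` (here `Fin (2*k)`, with `x_i`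
corresponding to the element of value `i - 1`) in which two distinct vertices `x_i`
and `x_j` are adjacent if and only if `|i - j| ≤ k - 1`. -/
def Agraph (k : ℕ) : SimpleGraph (Fin (2 * k)) where
  Adj i j := i ≠ j ∧ (i : ℕ) ≤ (j : ℕ) + (k - 1) ∧ (j : ℕ) ≤ (i : ℕ) + (k - 1)
  symm := ⟨fun i j h => ⟨h.1.symm, h.2.2, h.2.1⟩⟩
  loopless := ⟨fun i h => h.1 rfl⟩

/-!
If a locating set `S` of `A_k` had fewer than `k` elements, look at the vertices of the left half
`x_1, …, x_k` outside `S`. Such an `x_i` sees exactly the vertices of `S` up to `x_{i+k-1}`, so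
their traces on `S` are nested, all contain the left part of `S`, and are pairwise distinct;
counting sizes forces one of these traces to be all of `S`. By the symmetry `x_i ↦ x_{2k+1-i}`
the same happens in the right half, and two distinct vertices with the same trace contradict
locating. Conversely `{x_2, …, x_{k+1}}` is a locating-dominating set of size `k`.
-/

open Set

/-- Members of a chain are determined by their sizes, which here are `|s|` distinct numbers in
`[|A|, |S|]`; as `|s|` is at least the length of this interval, the size `|S|` is attained. -/
theorem Set.exists_eq_of_monotoneOn_of_ncard_lt {α ι : Type*} [LinearOrder ι] {T : ι → Set α}
    {s : Set ι} {A S : Set α} (hS : S.Finite) (hmono : MonotoneOn T s) (hinj : InjOn T s)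
    (hAT : ∀ i ∈ s, A ⊆ T i) (hTS : ∀ i ∈ s, T i ⊆ S) (hAS : A ⊆ S)
    (hcard : S.ncard < s.ncard + A.ncard) : ∃ i ∈ s, T i = S := by
  have hsizes : InjOn (fun i => (T i).ncard) s := by
    intro i hi j hj hij
    wlog hle : i ≤ j generalizing i j
    · exact (this hj hi hij.symm (le_of_not_ge hle)).symm
    exact hinj hi hj (eq_of_subset_of_ncard_le (hmono hi hj hle) hij.ge (hS.subset (hTS j hj)))
  obtain ⟨i, hi, hTi⟩ := surj_on_of_inj_on_of_ncard_le (t := Icc A.ncard S.ncard)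
    (fun i _ => (T i).ncard)
    (fun i hi => ⟨ncard_le_ncard (hAT i hi) (hS.subset (hTS i hi)), ncard_le_ncard (hTS i hi) hS⟩)
    (fun i j hi hj h => hsizes hi hj h) (by rw [ncard_Icc_nat]; omega) (toFinite _)
    S.ncard ⟨ncard_le_ncard hAS hS, le_rfl⟩
  exact ⟨i, hi, eq_of_subset_of_ncard_le (hTS i hi) hTi.le hS⟩

theorem IsLocatingSet.preimage {V W : Type*} {G : SimpleGraph V} {H : SimpleGraph W} {S : Set W}
    (hS : IsLocatingSet H S) (e : G ≃g H) : IsLocatingSet G (e ⁻¹' S) := by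
  intro u hu v hv huv htrace
  refine hS (e u) hu (e v) hv (e.injective.ne huv) ?_
  ext w
  obtain ⟨w, rfl⟩ := e.surjective w
  simpa [e.map_adj_iff] using congrArg (w ∈ ·) htrace

theorem isLocatingDominatingSet_of_separating_neighbors {V : Type*} [LinearOrder V]
    {G : SimpleGraph V} {D : Set V}
    (h : ∀ u ∉ D, ∃ w ∈ D, G.Adj u w ∧ ∀ v ∉ D, u < v → ¬ G.Adj v w) :
    IsLocatingDominatingSet G D := by
  refine ⟨fun v hv => ?_, fun u hu v hv huv htrace => ?_⟩
  · obtain ⟨w, hwD, hvw, -⟩ := h v hv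
    exact ⟨w, hwD, hvw.symm⟩
  · wlog hlt : u < v generalizing u v
    · exact this v hv u hu huv.symm htrace.symm (huv.symm.lt_of_le (not_lt.1 hlt))
    obtain ⟨w, hwD, huw, hvw⟩ := h u hu
    have hw : w ∈ {w | w ∈ D ∧ G.Adj v w} := htrace ▸ ⟨hwD, huw⟩
    exact hvw v hv hlt hw.2

theorem combinable_of_forall_le_ncard {V : Type*} [Fintype V] {G : SimpleGraph V} {D : Set V}
    (hD : IsLocatingDominatingSet G D) (hmin : ∀ S, IsLocatingSet G S → D.ncard ≤ S.ncard) :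
    Combinable G := by
  have hloc : IsLeast {n | ∃ S, IsLocatingSet G S ∧ S.ncard = n} D.ncard :=
    ⟨⟨D, hD.2, rfl⟩, by rintro _ ⟨S, hS, rfl⟩; exact hmin S hS⟩
  have hlocDom : IsLeast {n | ∃ S, IsLocatingDominatingSet G S ∧ S.ncard = n} D.ncard :=
    ⟨⟨D, hD, rfl⟩, by rintro _ ⟨S, hS, rfl⟩; exact hmin S hS.2⟩
  rw [Combinable, locNumber, locDomNumber, hloc.csInf_eq, hlocDom.csInf_eq]

namespace Agraph

variable {k : ℕ}

theorem adj_iff {i j : Fin (2 * k)} :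
    (Agraph k).Adj i j ↔ i ≠ j ∧ (i : ℕ) ≤ j + (k - 1) ∧ (j : ℕ) ≤ i + (k - 1) :=
  Iff.rfl

def reflect (k : ℕ) : Agraph k ≃g Agraph k where
  toEquiv := Fin.revPerm
  map_rel_iff' {i j} := by
    simp only [adj_iff, Fin.revPerm_apply, ne_eq, Fin.rev_inj, Fin.val_rev]
    have := i.isLt
    have := j.isLt
    omega

theorem ncard_setOf_val_lt : {u : Fin (2 * k) | (u : ℕ) < k}.ncard = k := by
  have hsub : Iio k ⊆ range (Fin.val : Fin (2 * k) → ℕ) := by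
    rw [Fin.range_val]
    exact Iio_subset_Iio (by omega)
  exact (ncard_preimage_of_injective_subset_range Fin.val_injective hsub).trans (ncard_Iio_nat k)

theorem exists_lt_forall_adj_of_ncard_lt {S : Set (Fin (2 * k))}
    (hS : IsLocatingSet (Agraph k) S) (hcard : S.ncard < k) :
    ∃ u : Fin (2 * k), (u : ℕ) < k ∧ u ∉ S ∧ ∀ w ∈ S, (Agraph k).Adj u w := by
  set L : Set (Fin (2 * k)) := {u | (u : ℕ) < k}
  set trace : Fin (2 * k) → Set (Fin (2 * k)) := fun u => {w | w ∈ S ∧ (Agraph k).Adj u w}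
  have hmono : MonotoneOn trace (L \ S) := by
    rintro u ⟨hu, -⟩ v ⟨hv, hvS⟩ huv w ⟨hwS, huw⟩
    refine ⟨hwS, fun hvw => hvS (hvw ▸ hwS), ?_⟩
    simp only [L, adj_iff, Fin.le_def, mem_ofPred_eq] at hu hv huv huw
    omega
  have hinj : InjOn trace (L \ S) := fun u ⟨_, huS⟩ v ⟨_, hvS⟩ h =>
    by_contra fun huv => hS u huS v hvS huv h
  have hleft : ∀ u ∈ L \ S, S ∩ L ⊆ trace u := by
    rintro u ⟨hu, huS⟩ w ⟨hwS, hw⟩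
    refine ⟨hwS, fun huw => huS (huw ▸ hwS), ?_⟩
    simp only [L, mem_ofPred_eq] at hu hw
    omega
  have hsize : S.ncard < (L \ S).ncard + (S ∩ L).ncard := by
    rwa [add_comm, inter_comm, ncard_inter_add_ncard_sdiff_eq_ncard _ _ (toFinite _),
      ncard_setOf_val_lt]
  obtain ⟨u, ⟨hu, huS⟩, hfull⟩ := exists_eq_of_monotoneOn_of_ncard_lt (toFinite S) hmono hinj
    hleft (fun _ _ => sep_subset _ _) inter_subset_left hsize
  exact ⟨u, hu, huS, fun w hw => (hfull.symm ▸ hw : w ∈ trace u).2⟩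

theorem exists_le_forall_adj_of_ncard_lt {S : Set (Fin (2 * k))}
    (hS : IsLocatingSet (Agraph k) S) (hcard : S.ncard < k) :
    ∃ v : Fin (2 * k), k ≤ (v : ℕ) ∧ v ∉ S ∧ ∀ w ∈ S, (Agraph k).Adj v w := by
  obtain ⟨u, hu, huS, hadj⟩ := exists_lt_forall_adj_of_ncard_lt (hS.preimage (reflect k))
    (by rwa [ncard_preimage_of_injective_subset_range (reflect k).injective (by simp)])
  refine ⟨reflect k u, ?_, huS, fun w hw => ?_⟩
  · simp [reflect]
    omega
  · simpa using (reflect k).map_adj_iff.2 (hadj ((reflect k).symm w) (by simpa using hw))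

theorem le_ncard_of_isLocatingSet {S : Set (Fin (2 * k))} (hS : IsLocatingSet (Agraph k) S) :
    k ≤ S.ncard := by
  by_contra! hcard
  obtain ⟨u, hu, huS, hu_adj⟩ := exists_lt_forall_adj_of_ncard_lt hS hcard
  obtain ⟨v, hv, hvS, hv_adj⟩ := exists_le_forall_adj_of_ncard_lt hS hcard
  refine hS u huS v hvS (Fin.ne_of_lt (by omega)) ?_
  ext w
  exact ⟨fun h => ⟨h.1, hv_adj w h.1⟩, fun h => ⟨h.1, hu_adj w h.1⟩⟩

def locDomSet (k : ℕ) : Set (Fin (2 * k)) := {u | 1 ≤ (u : ℕ) ∧ (u : ℕ) ≤ k}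

theorem ncard_locDomSet (hk : 1 ≤ k) : (locDomSet k).ncard = k := by
  have hsub : Icc 1 k ⊆ range (Fin.val : Fin (2 * k) → ℕ) := by
    rw [Fin.range_val]
    exact (Icc_subset_Iio_iff hk).2 (by omega)
  exact (ncard_preimage_of_injective_subset_range Fin.val_injective hsub).trans (by simp)

theorem isLocatingDominatingSet_locDomSet (hk : 2 ≤ k) :
    IsLocatingDominatingSet (Agraph k) (locDomSet k) := by
  refine isLocatingDominatingSet_of_separating_neighbors fun u hu => ?_
  -- the leftmost neighbour of `u` in `locDomSet k`; every later vertex outside it is too far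
  refine ⟨⟨max 1 (u + 1 - k), by have := u.isLt; omega⟩, ?_, ?_, fun v hv huv => ?_⟩
  all_goals simp only [locDomSet, adj_iff, mem_ofPred_eq, ne_eq, Fin.ext_iff, Fin.lt_def] at *
  all_goals omega

end Agraph

/-- For every integer `k ≥ 2`, every locating set of `A_k` has cardinality at least `k`;
in particular the minimum cardinality of a locating set of `A_k` equals `γ_L(A_k)`,
i.e. `A_k` is combinable. -/
theorem Agraph_combinable (k : ℕ) (hk : 2 ≤ k) :
    (∀ S : Set (Fin (2 * k)), IsLocatingSet (Agraph k) S → k ≤ S.ncard) ∧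
      Combinable (Agraph k) := by
  refine ⟨fun S hS => Agraph.le_ncard_of_isLocatingSet hS, ?_⟩
  refine combinable_of_forall_le_ncard (Agraph.isLocatingDominatingSet_locDomSet hk)
    fun S hS => ?_
  rw [Agraph.ncard_locDomSet (by omega)]
  exact Agraph.le_ncard_of_isLocatingSet hS
end

section
/- Every tree T in the family 𝒯, of order n, satisfies gamma_L(T) = n/2. -/
/-- `v` is a leaf of `G`: it has exactly one neighbor. -/
def IsLeaf {V : Type*} (G : SimpleGraph V) (v : V) : Prop :=
  (G.neighborSet v).ncard = 1

/-- `M` is a perfect matching of `G` and `c` a black/white coloring (`true` = black,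
`false` = white) such that every edge of `M` has one white end and one black end, and
every white vertex is either a leaf, or has degree 2 and is adjacent to a black vertex
that has a white leaf as a neighbor. -/
def GoodMatchingColoring {V : Type*} (G : SimpleGraph V) (M : G.Subgraph)
    (c : V → Bool) : Prop :=
  M.IsPerfectMatching ∧
    (∀ u v : V, M.Adj u v → c u ≠ c v) ∧
    (∀ w : V, c w = false →
      IsLeaf G w ∨
        ((G.neighborSet w).ncard = 2 ∧
          ∃ b : V, G.Adj w b ∧ c b = true ∧
            ∃ l : V, G.Adj b l ∧ c l = false ∧ IsLeaf G l))

/-- The family `𝒯` of trees admitting a perfect matching together with a black/white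
coloring as in `GoodMatchingColoring`. -/
def FamilyT {V : Type*} (G : SimpleGraph V) : Prop :=
  G.IsTree ∧ ∃ (M : G.Subgraph) (c : V → Bool), GoodMatchingColoring G M c

/-!
The black vertices always form a locating-dominating set: each white vertex sees its black
mate, and two white vertices seeing the same black set would share both mates as common
neighbours, closing a 4-cycle. Conversely, map every white vertex `w` to a vertex of a
locating-dominating set `D`: its mate if that lies in `D`, else `w` itself if `w ∈ D`. If
neither lies in `D`, then `w` is not a leaf, so it has degree 2 and its other neighbour `b` is
the mate of a white leaf `l`; domination forces `b ∈ D`, and location forces `l ∈ D`, so `w`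
is sent to `l`, from which `w` is recovered as the unique vertex outside `D` with
`N(w) ∩ D = {b}`. This map is injective, so `|D|` is at least the number `n/2` of white vertices.
-/

namespace SimpleGraph

variable {V : Type*} {G : SimpleGraph V}

theorem IsAcyclic.commonNeighbors_subsingleton (hG : G.IsAcyclic) {u v : V} (huv : u ≠ v) :
    (G.commonNeighbors u v).Subsingleton := by
  intro x hx y hy
  rw [mem_commonNeighbors] at hx hy
  let p : G.Path u v := ⟨.cons hx.1 (.cons hx.2.symm .nil), by
    simp [Walk.isPath_def, hx.1.ne, huv, hx.2.ne']⟩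
  let q : G.Path u v := ⟨.cons hy.1 (.cons hy.2.symm .nil), by
    simp [Walk.isPath_def, hy.1.ne, huv, hy.2.ne']⟩
  have hpq : p = q := (hG.subsingleton_path u v).elim p q
  simpa [p, q] using congrArg (fun r : G.Path u v => r.1.support) hpq

namespace Subgraph.IsPerfectMatching

variable {M : G.Subgraph}

noncomputable def mate (hM : M.IsPerfectMatching) (v : V) : V :=
  (isPerfectMatching_iff.mp hM v).exists.choose

theorem adj_mate (hM : M.IsPerfectMatching) (v : V) : M.Adj v (hM.mate v) :=
  (isPerfectMatching_iff.mp hM v).exists.choose_spec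

theorem mate_mate (hM : M.IsPerfectMatching) (v : V) : hM.mate (hM.mate v) = v :=
  hM.1.eq_of_adj_left (hM.adj_mate _) (hM.adj_mate v).symm

theorem mate_injective (hM : M.IsPerfectMatching) : Function.Injective hM.mate :=
  Function.LeftInverse.injective hM.mate_mate

end Subgraph.IsPerfectMatching

end SimpleGraph

open SimpleGraph

section

variable {V : Type*} {G : SimpleGraph V}

theorem IsLeaf.eq_of_adj {l a b : V} (hl : IsLeaf G l) (ha : G.Adj l a) (hb : G.Adj l b) :
    a = b := by
  obtain ⟨x, hx⟩ := Set.ncard_eq_one.mp hl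
  have ha' : a ∈ G.neighborSet l := ha
  have hb' : b ∈ G.neighborSet l := hb
  rw [hx] at ha' hb'
  exact ha'.trans hb'.symm

theorem IsDominatingSet.mem_of_isLeaf {D : Set V} (hD : IsDominatingSet G D) {l v : V}
    (hl : IsLeaf G l) (hlD : l ∉ D) (hlv : G.Adj l v) : v ∈ D := by
  obtain ⟨u, huD, hul⟩ := hD l hlD
  rwa [← hl.eq_of_adj hul.symm hlv]

theorem isLocatingDominatingSet_univ : IsLocatingDominatingSet G Set.univ :=
  ⟨fun v hv => absurd (Set.mem_univ v) hv, fun u hu => absurd (Set.mem_univ u) hu⟩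

theorem locDomNumber_le [Fintype V] {D : Set V} (hD : IsLocatingDominatingSet G D) :
    locDomNumber G ≤ D.ncard :=
  Nat.sInf_le ⟨D, hD, rfl⟩

theorem le_locDomNumber [Fintype V] {k : ℕ}
    (h : ∀ D : Set V, IsLocatingDominatingSet G D → k ≤ D.ncard) : k ≤ locDomNumber G :=
  le_csInf ⟨_, Set.univ, isLocatingDominatingSet_univ, rfl⟩ fun _ ⟨D, hD, hDk⟩ => hDk ▸ h D hD

variable {M : G.Subgraph} {c : V → Bool}

theorem color_mate (hM : M.IsPerfectMatching) (hc : ∀ u v : V, M.Adj u v → c u ≠ c v)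
    (v : V) : c (hM.mate v) = !c v :=
  Bool.eq_not.mpr (hc v _ (hM.adj_mate v)).symm

theorem ncard_black_eq_ncard_white (hM : M.IsPerfectMatching)
    (hc : ∀ u v : V, M.Adj u v → c u ≠ c v) :
    {v | c v = true}.ncard = {v | c v = false}.ncard := by
  have himage : hM.mate '' {v | c v = true} = {v | c v = false} := by
    ext v
    refine ⟨?_, fun hv => ⟨hM.mate v, ?_, hM.mate_mate v⟩⟩
    · rintro ⟨u, hu, rfl⟩
      simp_all [color_mate hM hc]
    · simp_all [color_mate hM hc]
  rw [← himage, Set.ncard_image_of_injective _ hM.mate_injective]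

theorem isLocatingDominatingSet_black (hG : G.IsAcyclic) (hM : M.IsPerfectMatching)
    (hc : ∀ u v : V, M.Adj u v → c u ≠ c v) :
    IsLocatingDominatingSet G {v | c v = true} := by
  have black_mate : ∀ v, v ∉ {v | c v = true} → c (hM.mate v) = true := fun v hv => by
    simpa [color_mate hM hc] using hv
  refine ⟨fun v hv => ⟨hM.mate v, black_mate v hv, (M.adj_sub (hM.adj_mate v)).symm⟩, ?_⟩
  intro u hu v hv huv htrace
  have hvu : G.Adj v (hM.mate u) :=
    ((Set.ext_iff.mp htrace _).mp ⟨black_mate u hu, M.adj_sub (hM.adj_mate u)⟩).2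
  have huv' : G.Adj u (hM.mate v) :=
    ((Set.ext_iff.mp htrace _).mpr ⟨black_mate v hv, M.adj_sub (hM.adj_mate v)⟩).2
  exact huv (hM.mate_injective <| hG.commonNeighbors_subsingleton huv
    ⟨M.adj_sub (hM.adj_mate u), hvu⟩ ⟨huv', M.adj_sub (hM.adj_mate v)⟩)

theorem IsLocatingDominatingSet.mem_and_trace_eq_mate_of_adj_leaf {D : Set V}
    (hD : IsLocatingDominatingSet G D) (hM : M.IsPerfectMatching) {w b l : V}
    (hdeg : (G.neighborSet w).ncard = 2) (hwb : G.Adj w b) (hbl : G.Adj b l)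
    (hl : IsLeaf G l) (hwD : w ∉ D) (hmD : hM.mate w ∉ D) :
    l ∈ D ∧ {z | z ∈ D ∧ G.Adj w z} = {hM.mate l} := by
  have hml : hM.mate l = b := hl.eq_of_adj (M.adj_sub (hM.adj_mate l)) hbl.symm
  have hlw : l ≠ w := by
    rintro rfl
    exact absurd (hl.symm.trans hdeg) (by decide)
  have hbm : b ≠ hM.mate w := fun h => hlw (hM.mate_injective (hml.trans h))
  have hnbr : ∀ z, G.Adj w z → z = hM.mate w ∨ z = b := by
    have hfin : (G.neighborSet w).Finite := Set.finite_of_ncard_ne_zero (by rw [hdeg]; decide)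
    have : {hM.mate w, b} = G.neighborSet w := by
      refine Set.eq_of_subset_of_ncard_le ?_ ?_ hfin
      · rintro z (rfl | rfl)
        exacts [M.adj_sub (hM.adj_mate w), hwb]
      · rw [hdeg, Set.ncard_pair hbm.symm]
    intro z hz
    rwa [← mem_neighborSet, ← this] at hz
  have hbD : b ∈ D := by
    obtain ⟨u, huD, huw⟩ := hD.1 w hwD
    obtain rfl | rfl := hnbr u huw.symm
    exacts [absurd huD hmD, huD]
  have htrace : ∀ z, z ∈ D ∧ G.Adj w z ↔ z = b := by
    refine fun z => ⟨fun ⟨hzD, hwz⟩ => ?_, fun hz => hz ▸ ⟨hbD, hwb⟩⟩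
    obtain rfl | rfl := hnbr z hwz
    exacts [absurd hzD hmD, rfl]
  have hlD : l ∈ D := by
    by_contra hlD
    refine hD.2 w hwD l hlD hlw.symm (Set.ext fun z => (htrace z).trans ?_)
    exact ⟨fun hz => hz ▸ ⟨hbD, hbl.symm⟩, fun ⟨_, hlz⟩ => hl.eq_of_adj hlz hbl.symm⟩
  exact ⟨hlD, hml ▸ Set.ext htrace⟩

theorem ncard_white_le [Finite V] (h : GoodMatchingColoring G M c) {D : Set V}
    (hD : IsLocatingDominatingSet G D) : {v | c v = false}.ncard ≤ D.ncard := by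
  classical
  obtain ⟨hM, hc, hwhite⟩ := h
  have partner : ∀ w, c w = false → w ∉ D → hM.mate w ∉ D → ∃ l, c l = false ∧ l ∈ D ∧
      hM.mate l ∈ D ∧ {z | z ∈ D ∧ G.Adj w z} = {hM.mate l} := by
    intro w hw hwD hmD
    rcases hwhite w hw with hleaf | ⟨hdeg, b, hwb, -, l, hbl, hl, hleaf⟩
    · exact absurd (hD.1.mem_of_isLeaf hleaf hwD (M.adj_sub (hM.adj_mate w))) hmD
    · obtain ⟨hlD, htrace⟩ :=
        hD.mem_and_trace_eq_mate_of_adj_leaf hM hdeg hwb hbl hleaf hwD hmD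
      exact ⟨l, hl, hlD, ((Set.ext_iff.mp htrace _).mpr rfl).1, htrace⟩
  choose! ℓ hℓ using partner
  let R w := if hM.mate w ∈ D then hM.mate w else if w ∈ D then w else ℓ w
  have hR : ∀ w, (hM.mate w ∈ D ∧ R w = hM.mate w) ∨ (hM.mate w ∉ D ∧ w ∈ D ∧ R w = w) ∨
      (hM.mate w ∉ D ∧ w ∉ D ∧ R w = ℓ w) := by
    intro w
    by_cases hm : hM.mate w ∈ D
    · simp [R, hm]
    · by_cases hwD : w ∈ D <;> simp [R, hm, hwD]
  have hcm := color_mate hM hc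
  refine Set.ncard_le_ncard_of_injOn R (fun w hw => ?_) (fun w₁ h₁ w₂ h₂ heq => ?_)
  · rcases hR w with ⟨hm, e⟩ | ⟨-, hwD, e⟩ | ⟨hm, hwD, e⟩ <;> rw [e]
    exacts [hm, hwD, (hℓ w hw hwD hm).2.1]
  rw [Set.mem_ofPred_eq] at h₁ h₂
  rcases hR w₁ with ⟨m₁, e₁⟩ | ⟨m₁, d₁, e₁⟩ | ⟨m₁, d₁, e₁⟩ <;>
    rcases hR w₂ with ⟨m₂, e₂⟩ | ⟨m₂, d₂, e₂⟩ | ⟨m₂, d₂, e₂⟩ <;>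
    rw [e₁, e₂] at heq
  · exact hM.mate_injective heq
  · exact absurd (congrArg c heq) (by simp [hcm, h₁, h₂])
  · exact absurd (congrArg c heq) (by simp [hcm, h₁, (hℓ w₂ h₂ d₂ m₂).1])
  · exact absurd (congrArg c heq) (by simp [hcm, h₁, h₂])
  · exact heq
  · exact absurd (heq ▸ (hℓ w₂ h₂ d₂ m₂).2.2.1) m₁
  · exact absurd (congrArg c heq) (by simp [hcm, h₂, (hℓ w₁ h₁ d₁ m₁).1])
  · exact absurd (heq ▸ (hℓ w₁ h₁ d₁ m₁).2.2.1) m₂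
  · by_contra hne
    exact hD.2 w₁ d₁ w₂ d₂ hne (by rw [(hℓ w₁ h₁ d₁ m₁).2.2.2, (hℓ w₂ h₂ d₂ m₂).2.2.2, heq])

end

/-- Every tree `T` in the family `𝒯`, of order `n`, satisfies `γ_L(T) = n/2`. -/
theorem locDomNumber_of_familyT {V : Type*} [Fintype V] (T : SimpleGraph V)
    (hT : FamilyT T) : 2 * locDomNumber T = Fintype.card V := by
  obtain ⟨htree, M, c, h⟩ := hT
  have hsplit : {v | c v = true}.ncard + {v | c v = false}.ncard = Fintype.card V := by
    have hcompl : {v | c v = false} = {v | c v = true}ᶜ := by ext; simp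
    rw [hcompl, Set.ncard_add_ncard_compl, Nat.card_eq_fintype_card]
  have hbalance := ncard_black_eq_ncard_white h.1 h.2.1
  have hupper := locDomNumber_le (isLocatingDominatingSet_black htree.isAcyclic h.1 h.2.1)
  have hlower := le_locDomNumber fun D hD => ncard_white_le h hD
  omega
end
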